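/- arXiv:0901.4888 — 2 statements merged into one kernel-verified Lean document; each statement's English description precedes it below -/
import Mathlib

section
/- Let L be a bounded distributive lattice and let f : Lⁿ → L be a lattice polynomial function. Then for every x ∈ Lⁿ, f(x) = ⋁_{I ⊆ {1,…,n}} ( f(e_I) ∧ ⋀_{i ∈ I} x_i ), where the empty meet is taken to be the top element 1; that is, the map α_f : 2^{[n]} → L, I ↦ f(e_I), belongs to DNF(f). -/
open Classical

variable {L : Type*}

section Defs

variable [DistribLattice L] [BoundedOrder L]

/-- The ternary median term. -/
def med (x y z : L) : L := (x ⊔ y) ⊓ (x ⊔ z) ⊓ (y ⊔ z)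

/-- Lattice polynomial functions of arity `n`: the smallest class of functions
`(Fin n → L) → L` containing projections and constants and closed under
pointwise binary meets and joins. -/
inductive IsLatticePolynomial {n : ℕ} : ((Fin n → L) → L) → Prop
  | proj (k : Fin n) : IsLatticePolynomial fun x => x k
  | const (c : L) : IsLatticePolynomial fun _ => c
  | inf {f g : (Fin n → L) → L} :
      IsLatticePolynomial f → IsLatticePolynomial g →
      IsLatticePolynomial fun x => f x ⊓ g x
  | sup {f g : (Fin n → L) → L} :
      IsLatticePolynomial f → IsLatticePolynomial g →
      IsLatticePolynomial fun x => f x ⊔ g x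

/-- Unary lattice polynomial functions: the smallest class of functions `L → L`
containing the identity and constants and closed under pointwise binary meets
and joins. -/
inductive IsUnaryLatticePolynomial : (L → L) → Prop
  | id : IsUnaryLatticePolynomial fun x : L => x
  | const (c : L) : IsUnaryLatticePolynomial fun _ => c
  | inf {f g : L → L} :
      IsUnaryLatticePolynomial f → IsUnaryLatticePolynomial g →
      IsUnaryLatticePolynomial fun x => f x ⊓ g x
  | sup {f g : L → L} :
      IsUnaryLatticePolynomial f → IsUnaryLatticePolynomial g →
      IsUnaryLatticePolynomial fun x => f x ⊔ g x

/-- `h : L → L` preserves binary meets. -/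
def PreservesInf (h : L → L) : Prop := ∀ x y : L, h (x ⊓ y) = h x ⊓ h y

/-- `h : L → L` preserves binary joins. -/
def PreservesSup (h : L → L) : Prop := ∀ x y : L, h (x ⊔ y) = h x ⊔ h y

/-- Condition (H): `f(x ∧ c̄) = f(x) ∧ c` for all `c ∈ [f(0̄), f(1̄)]`. -/
def CondH {n : ℕ} (f : (Fin n → L) → L) : Prop :=
  ∀ (x : Fin n → L) (c : L), f (fun _ => ⊥) ≤ c → c ≤ f (fun _ => ⊤) →
    (f fun i => x i ⊓ c) = f x ⊓ c

/-- Condition (H*), the dual of (H): `f(x ∨ c̄) = f(x) ∨ c` for all `c ∈ [f(0̄), f(1̄)]`. -/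
def CondHDual {n : ℕ} (f : (Fin n → L) → L) : Prop :=
  ∀ (x : Fin n → L) (c : L), f (fun _ => ⊥) ≤ c → c ≤ f (fun _ => ⊤) →
    (f fun i => x i ⊔ c) = f x ⊔ c

/-- Condition (V): `f(x) = f(x ∧ c̄) ∨ f([x]_c)` for all `c ∈ [f(0̄), f(1̄)]`,
where the `i`-th component of `[x]_c` is `0` if `x i ≤ c`, and `x i` otherwise. -/
def CondV {n : ℕ} (f : (Fin n → L) → L) : Prop :=
  ∀ (x : Fin n → L) (c : L), f (fun _ => ⊥) ≤ c → c ≤ f (fun _ => ⊤) →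
    f x = (f fun i => x i ⊓ c) ⊔ (f fun i => if x i ≤ c then ⊥ else x i)

/-- Condition (V*), the dual of (V): `f(x) = f(x ∨ c̄) ∧ f([x]^c)` for all
`c ∈ [f(0̄), f(1̄)]`, where the `i`-th component of `[x]^c` is `1` if `c ≤ x i`,
and `x i` otherwise. -/
def CondVDual {n : ℕ} (f : (Fin n → L) → L) : Prop :=
  ∀ (x : Fin n → L) (c : L), f (fun _ => ⊥) ≤ c → c ≤ f (fun _ => ⊤) →
    f x = (f fun i => x i ⊔ c) ⊓ (f fun i => if c ≤ x i then ⊤ else x i)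

/-- Condition (I): `f(c̄) = c` for all `c ∈ [f(0̄), f(1̄)]`. -/
def CondI {n : ℕ} (f : (Fin n → L) → L) : Prop :=
  ∀ c : L, f (fun _ => ⊥) ≤ c → c ≤ f (fun _ => ⊤) → f (fun _ => c) = c

/-- A subset `S` of `L` is convex if `a ≤ b ≤ c` with `a, c ∈ S` implies `b ∈ S`. -/
def IsConvexSubset (S : Set L) : Prop :=
  ∀ ⦃a b c : L⦄, a ∈ S → c ∈ S → a ≤ b → b ≤ c → b ∈ S

/-- For every function `g = f_K^a` obtained from `f` by substituting constants for
variables (including `K = ∅`, i.e. `g = f`), the diagonal `δ_g` preserves binary meets.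
Here `δ_{f_K^a}(x) = f(y)` where `y i = a i` for `i ∈ K` and `y i = x` otherwise. -/
def DiagSubstPreservesInf {n : ℕ} (f : (Fin n → L) → L) : Prop :=
  ∀ (K : Set (Fin n)) (a : Fin n → L) (x y : L),
    (f fun i => if i ∈ K then a i else x ⊓ y) =
      (f fun i => if i ∈ K then a i else x) ⊓ (f fun i => if i ∈ K then a i else y)

/-- For every function `g = f_K^a` obtained from `f` by substituting constants for
variables (including `K = ∅`, i.e. `g = f`), the diagonal `δ_g` preserves binary joins. -/
def DiagSubstPreservesSup {n : ℕ} (f : (Fin n → L) → L) : Prop :=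
  ∀ (K : Set (Fin n)) (a : Fin n → L) (x y : L),
    (f fun i => if i ∈ K then a i else x ⊔ y) =
      (f fun i => if i ∈ K then a i else x) ⊔ (f fun i => if i ∈ K then a i else y)

end Defs

/-! Induct on the polynomial. Evaluating the DNF with coefficients `α` commutes with joins of
coefficient maps and, when the coefficients are monotone in `I`, also with meets: the meet of
the terms for `I` and `J` is absorbed by the term for `I ∪ J`. The coefficient map
`I ↦ f(e_I)` is monotone because lattice polynomial functions are. -/

section DNF

variable [DistribLattice L] [BoundedOrder L] {ι : Type*}

def charVec [DecidableEq ι] (I : Finset ι) : ι → L := fun i => if i ∈ I then ⊤ else ⊥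

theorem monotone_charVec [DecidableEq ι] : Monotone (charVec : Finset ι → ι → L) := by
  intro I J hIJ i
  by_cases hi : i ∈ I
  · simp [charVec, hi, hIJ hi]
  · simp [charVec, hi]

variable [Fintype ι]

def evalDNF (α : Finset ι → L) (x : ι → L) : L :=
  Finset.univ.sup fun I => α I ⊓ I.inf x

theorem evalDNF_mono {α β : Finset ι → L} (h : α ≤ β) (x : ι → L) :
    evalDNF α x ≤ evalDNF β x :=
  Finset.sup_mono_fun fun I _ => inf_le_inf_right _ (h I)

theorem evalDNF_const (c : L) (x : ι → L) : evalDNF (fun _ => c) x = c := by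
  refine le_antisymm (Finset.sup_le fun I _ => inf_le_left) ?_
  simpa [evalDNF] using
    Finset.le_sup (f := fun I : Finset ι => c ⊓ I.inf x) (Finset.mem_univ ∅)

theorem evalDNF_sup (α β : Finset ι → L) (x : ι → L) :
    evalDNF (fun I => α I ⊔ β I) x = evalDNF α x ⊔ evalDNF β x := by
  simp only [evalDNF, inf_sup_right]
  exact Finset.sup_sup

theorem evalDNF_inf [DecidableEq ι] {α β : Finset ι → L} (hα : Monotone α) (hβ : Monotone β)
    (x : ι → L) : evalDNF (fun I => α I ⊓ β I) x = evalDNF α x ⊓ evalDNF β x := by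
  refine le_antisymm (le_inf (evalDNF_mono (fun I => inf_le_left) x)
    (evalDNF_mono (fun I => inf_le_right) x)) ?_
  rw [evalDNF, evalDNF, Finset.sup_inf_distrib_right]
  refine Finset.sup_le fun I _ => ?_
  rw [Finset.sup_inf_distrib_left]
  refine Finset.sup_le fun J _ => le_trans ?_
    (Finset.le_sup (f := fun I : Finset ι => α I ⊓ β I ⊓ I.inf x) (Finset.mem_univ (I ∪ J)))
  rw [Finset.inf_union]
  exact le_inf
    (le_inf ((inf_le_left.trans inf_le_left).trans (hα Finset.subset_union_left))
      ((inf_le_right.trans inf_le_left).trans (hβ Finset.subset_union_right)))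
    (inf_le_inf inf_le_right inf_le_right)

theorem evalDNF_charVec_apply [DecidableEq ι] (k : ι) (x : ι → L) :
    evalDNF (fun I => charVec I k) x = x k := by
  refine le_antisymm (Finset.sup_le fun I _ => ?_) ?_
  · by_cases hk : k ∈ I
    · exact inf_le_right.trans (Finset.inf_le hk)
    · simp [charVec, hk]
  · simpa [evalDNF, charVec] using
      Finset.le_sup (f := fun I : Finset ι => charVec I k ⊓ I.inf x) (Finset.mem_univ {k})

end DNF

theorem IsLatticePolynomial.monotone [DistribLattice L] [BoundedOrder L] {n : ℕ}
    {f : (Fin n → L) → L} (hf : IsLatticePolynomial f) : Monotone f := by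
  induction hf with
  | proj k => exact fun x y h => h k
  | const c => exact monotone_const
  | inf _ _ ihf ihg => exact ihf.inf ihg
  | sup _ _ ihf ihg => exact ihf.sup ihg

/-- Goodstein: Every lattice polynomial function has the disjunctive
normal form representation `f(x) = ⋁_{I ⊆ [n]} (f(e_I) ∧ ⋀_{i ∈ I} x_i)`. -/
theorem polynomial_eq_DNF
    {L : Type*} [DistribLattice L] [BoundedOrder L] {n : ℕ}
    (f : (Fin n → L) → L) (hf : IsLatticePolynomial f) :
    ∀ x : Fin n → L,
      f x = (Finset.univ : Finset (Finset (Fin n))).sup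
        (fun I => f (fun i => if i ∈ I then (⊤ : L) else ⊥) ⊓ I.inf x) := by
  change ∀ x, f x = evalDNF (fun I => f (charVec I)) x
  induction hf with
  | proj k => exact fun x => (evalDNF_charVec_apply k x).symm
  | const c => exact fun x => (evalDNF_const c x).symm
  | sup _ _ ihf ihg =>
    intro x
    beta_reduce
    rw [ihf x, ihg x, evalDNF_sup]
  | inf hf hg ihf ihg =>
    intro x
    beta_reduce
    rw [ihf x, ihg x]
    exact (evalDNF_inf (hf.monotone.comp monotone_charVec)
      (hg.monotone.comp monotone_charVec) x).symm
end

section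
/- Let L be a bounded distributive lattice. A unary function f : L → L is a lattice polynomial function if and only if the range {f(x) : x ∈ L} is convex, f satisfies the idempotency equation f ∘ f = f, and f preserves ∧ and ∨. -/
open Classical

variable {L : Type*}

/-! For `a ≤ b`, the map `x ↦ (x ⊓ b) ⊔ a` is the retraction of `L` onto `[a, b]`; the unary
polynomials are exactly these maps, and such a retraction is a lattice endomorphism with convex
range that fixes its range. Conversely, a lattice endomorphism `f` is monotone, so its range lies
in `[f ⊥, f ⊤]`; if the range is convex it is all of `[f ⊥, f ⊤]`, so `f` fixes `x ⊓ f ⊤ ⊔ f ⊥`,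
and applying `f` to this term gives `f x ⊓ f ⊤ ⊔ f ⊥ = f x`. -/

section DistribLattice

variable [DistribLattice L]

theorem inf_sup_eq_sup_inf_of_le {a b : L} (hab : a ≤ b) (x : L) : x ⊓ b ⊔ a = (x ⊔ a) ⊓ b := by
  rw [sup_comm, sup_comm x, sup_inf_assoc_of_le x hab]

theorem inf_sup_inf_inf_sup {a₁ b₁ a₂ b₂ : L} (h₁ : a₁ ≤ b₁) (h₂ : a₂ ≤ b₂) (x : L) :
    (x ⊓ b₁ ⊔ a₁) ⊓ (x ⊓ b₂ ⊔ a₂) = x ⊓ (b₁ ⊓ b₂) ⊔ a₁ ⊓ a₂ := by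
  rw [inf_sup_eq_sup_inf_of_le h₁, inf_sup_eq_sup_inf_of_le h₂,
    inf_sup_eq_sup_inf_of_le (inf_le_inf h₁ h₂), inf_inf_inf_comm, ← sup_inf_left]

theorem sup_inf_sup_sup_inf (a₁ b₁ a₂ b₂ x : L) :
    (x ⊓ b₁ ⊔ a₁) ⊔ (x ⊓ b₂ ⊔ a₂) = x ⊓ (b₁ ⊔ b₂) ⊔ (a₁ ⊔ a₂) := by
  rw [sup_sup_sup_comm, ← inf_sup_left]

theorem preservesInf_inf_sup (a b : L) : PreservesInf fun x => x ⊓ b ⊔ a := by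
  intro x y
  rw [← sup_inf_right, inf_inf_inf_comm, inf_idem]

theorem preservesSup_inf_sup (a b : L) : PreservesSup fun x => x ⊓ b ⊔ a := by
  intro x y
  rw [sup_sup_sup_comm, sup_idem, ← inf_sup_right]

theorem inf_sup_eq_self_of_mem_Icc {a b x : L} (hx : x ∈ Set.Icc a b) : x ⊓ b ⊔ a = x := by
  rw [inf_eq_left.mpr hx.2, sup_eq_left.mpr hx.1]

theorem range_inf_sup_of_le {a b : L} (hab : a ≤ b) :
    Set.range (fun x => x ⊓ b ⊔ a) = Set.Icc a b := by
  ext y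
  refine ⟨?_, fun hy => ⟨y, inf_sup_eq_self_of_mem_Icc hy⟩⟩
  rintro ⟨x, rfl⟩
  exact ⟨le_sup_right, sup_le inf_le_right hab⟩

theorem isConvexSubset_Icc (a b : L) : IsConvexSubset (Set.Icc a b) :=
  fun _ _ _ hx hz hxy hyz => ⟨hx.1.trans hxy, hyz.trans hz.2⟩

theorem PreservesInf.monotone {f : L → L} (hf : PreservesInf f) : Monotone f := by
  intro x y hxy
  calc f x = f (x ⊓ y) := by rw [inf_eq_left.mpr hxy]
    _ = f x ⊓ f y := hf x y
    _ ≤ f y := inf_le_right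

theorem isUnaryLatticePolynomial_inf_sup (a b : L) :
    IsUnaryLatticePolynomial fun x => x ⊓ b ⊔ a :=
  .sup (.inf .id (.const b)) (.const a)

end DistribLattice

section BoundedDistribLattice

variable [DistribLattice L] [BoundedOrder L]

theorem IsUnaryLatticePolynomial.exists_eq_inf_sup {f : L → L} (hf : IsUnaryLatticePolynomial f) :
    ∃ a b : L, a ≤ b ∧ f = fun x => x ⊓ b ⊔ a := by
  induction hf with
  | id => exact ⟨⊥, ⊤, bot_le, by simp⟩
  | const c => exact ⟨c, c, le_rfl, by simp⟩
  | inf _ _ ihf ihg =>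
    obtain ⟨a₁, b₁, h₁, rfl⟩ := ihf
    obtain ⟨a₂, b₂, h₂, rfl⟩ := ihg
    exact ⟨a₁ ⊓ a₂, b₁ ⊓ b₂, inf_le_inf h₁ h₂, funext (inf_sup_inf_inf_sup h₁ h₂)⟩
  | sup _ _ ihf ihg =>
    obtain ⟨a₁, b₁, h₁, rfl⟩ := ihf
    obtain ⟨a₂, b₂, h₂, rfl⟩ := ihg
    exact ⟨a₁ ⊔ a₂, b₁ ⊔ b₂, sup_le_sup h₁ h₂, funext (sup_inf_sup_sup_inf a₁ b₁ a₂ b₂)⟩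

theorem eq_inf_sup_of_convex_idempotent_preserving {f : L → L}
    (hconv : IsConvexSubset (Set.range f)) (hidem : f ∘ f = f)
    (hinf : PreservesInf f) (hsup : PreservesSup f) :
    f = fun x => x ⊓ f ⊤ ⊔ f ⊥ := by
  have hfix : ∀ y ∈ Set.range f, f y = y := by
    rintro _ ⟨x, rfl⟩
    exact congrFun hidem x
  have hmem : ∀ x, f x ∈ Set.Icc (f ⊥) (f ⊤) := fun x =>
    ⟨hinf.monotone bot_le, hinf.monotone le_top⟩
  funext x
  have hz : x ⊓ f ⊤ ⊔ f ⊥ ∈ Set.range f :=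
    hconv ⟨⊥, rfl⟩ ⟨⊤, rfl⟩ le_sup_right (sup_le inf_le_right (hmem ⊤).1)
  calc f x = f x ⊓ f ⊤ ⊔ f ⊥ := (inf_sup_eq_self_of_mem_Icc (hmem x)).symm
    _ = f (x ⊓ f ⊤ ⊔ f ⊥) := by
      rw [hsup, hinf, hfix _ ⟨⊤, rfl⟩, hfix _ ⟨⊥, rfl⟩]
    _ = x ⊓ f ⊤ ⊔ f ⊥ := hfix _ hz

end BoundedDistribLattice

/-- A unary function `f : L → L` is a lattice polynomial function iff
its range is convex, `f` is idempotent (`f ∘ f = f`), and `f` preserves `∧` and `∨`. -/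
theorem isUnaryLatticePolynomial_iff_convex_idempotent_preserving
    {L : Type*} [DistribLattice L] [BoundedOrder L] (f : L → L) :
    IsUnaryLatticePolynomial f ↔
      IsConvexSubset (Set.range f) ∧ f ∘ f = f ∧ PreservesInf f ∧ PreservesSup f := by
  constructor
  · intro hf
    obtain ⟨a, b, hab, rfl⟩ := hf.exists_eq_inf_sup
    refine ⟨range_inf_sup_of_le hab ▸ isConvexSubset_Icc a b, ?_,
      preservesInf_inf_sup a b, preservesSup_inf_sup a b⟩
    funext x
    exact inf_sup_eq_self_of_mem_Icc (range_inf_sup_of_le hab ▸ Set.mem_range_self x)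
  · rintro ⟨hconv, hidem, hinf, hsup⟩
    rw [eq_inf_sup_of_convex_idempotent_preserving hconv hidem hinf hsup]
    exact isUnaryLatticePolynomial_inf_sup (f ⊥) (f ⊤)
end
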